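/- arXiv:2504.16229 — 4 statements merged into one kernel-verified Lean document; each statement's English description precedes it below -/
import Mathlib

section
/- Let d, k ≥ 1 be integers and z ≥ 1 a real. Let X ⊆ ℝ^d be a finite nonempty set and let C ⊆ ℝ^d be any nonempty finite set with |C| ≤ k. Then there exists a nonempty subset C' ⊆ X with |C'| ≤ k such that Cost(X, C') ≤ 2^{z+1} · Cost(X, C). In particular, the optimal (k,z)-medoids clustering cost min{Cost(X,C') : ∅ ≠ C' ⊆ X, |C'| ≤ k} is at most 2^{z+1} times the optimal (k,z)-clustering cost min{Cost(X,C) : ∅ ≠ C ⊆ ℝ^d, |C| ≤ k}. -/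
/-!
Replace every center `c ∈ C` by a point `p c` of `X` nearest to it. For `x ∈ X` served by `c`,
`dist x (p c) ≤ dist x c + dist c (p c) ≤ 2 * dist x c`, since `x` itself competes with `p c`.
Raising to the power `z ≥ 0` costs a factor `2 ^ z ≤ 2 ^ (z + 1)`.
-/

open scoped BigOperators

noncomputable def dSet {d : ℕ} (x : EuclideanSpace ℝ (Fin d))
    (C : Finset (EuclideanSpace ℝ (Fin d))) : ℝ :=
  sInf ((fun c => dist x c) '' (C : Set (EuclideanSpace ℝ (Fin d))))

noncomputable def kzCost {d : ℕ} (z : ℝ) (X C : Finset (EuclideanSpace ℝ (Fin d))) : ℝ :=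
  ∑ x ∈ X, dSet x C ^ z

section

variable {d : ℕ} {x c : EuclideanSpace ℝ (Fin d)} {C : Finset (EuclideanSpace ℝ (Fin d))}

lemma dSet_le_dist (hc : c ∈ C) : dSet x C ≤ dist x c :=
  csInf_le (C.finite_toSet.image _).bddBelow ⟨c, hc, rfl⟩

lemma exists_mem_dSet_eq_dist (x : EuclideanSpace ℝ (Fin d)) (hC : C.Nonempty) :
    ∃ c ∈ C, dSet x C = dist x c := by
  obtain ⟨c, hc, hce⟩ := (hC.to_set.image _).csInf_mem (C.finite_toSet.image fun c => dist x c)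
  exact ⟨c, hc, hce.symm⟩

lemma dSet_nonneg (x : EuclideanSpace ℝ (Fin d)) (C : Finset (EuclideanSpace ℝ (Fin d))) :
    0 ≤ dSet x C :=
  Real.sInf_nonneg fun _ ⟨_, _, h⟩ => h ▸ dist_nonneg

lemma dSet_image_le_two_mul {X : Finset (EuclideanSpace ℝ (Fin d))}
    {p : EuclideanSpace ℝ (Fin d) → EuclideanSpace ℝ (Fin d)}
    (hp : ∀ c, ∀ y ∈ X, dist c (p c) ≤ dist c y) (hC : C.Nonempty) (hx : x ∈ X) :
    dSet x (C.image p) ≤ 2 * dSet x C := by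
  obtain ⟨c, hc, hxc⟩ := exists_mem_dSet_eq_dist x hC
  calc dSet x (C.image p) ≤ dist x (p c) := dSet_le_dist (Finset.mem_image_of_mem p hc)
    _ ≤ dist x c + dist c (p c) := dist_triangle x c (p c)
    _ ≤ dist x c + dist c x := by gcongr; exact hp c x hx
    _ = 2 * dSet x C := by rw [dist_comm c x, hxc]; ring

lemma kzCost_le_rpow_mul_of_dSet_le {z a : ℝ} (hz : 0 ≤ z) (ha : 0 ≤ a)
    {X C' : Finset (EuclideanSpace ℝ (Fin d))} (h : ∀ x ∈ X, dSet x C' ≤ a * dSet x C) :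
    kzCost z X C' ≤ a ^ z * kzCost z X C := by
  rw [kzCost, kzCost, Finset.mul_sum]
  refine Finset.sum_le_sum fun x hx => ?_
  calc dSet x C' ^ z ≤ (a * dSet x C) ^ z := Real.rpow_le_rpow (dSet_nonneg x C') (h x hx) hz
    _ = a ^ z * dSet x C ^ z := Real.mul_rpow ha (dSet_nonneg x C)

end

theorem medoids_cost_vs_clustering_cost_general
    (d k : ℕ) (z : ℝ) (hz : 1 ≤ z)
    (X : Finset (EuclideanSpace ℝ (Fin d))) (hX : X.Nonempty)
    (C : Finset (EuclideanSpace ℝ (Fin d))) (hC : C.Nonempty) (hCk : C.card ≤ k) :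
    ∃ C' : Finset (EuclideanSpace ℝ (Fin d)),
      C' ⊆ X ∧ C'.Nonempty ∧ C'.card ≤ k ∧
        kzCost z X C' ≤ 2 ^ (z + 1) * kzCost z X C := by
  classical
  choose p hpX hp using fun c : EuclideanSpace ℝ (Fin d) => X.exists_min_image (dist c) hX
  refine ⟨C.image p, Finset.image_subset_iff.mpr fun c _ => hpX c, hC.image p,
    Finset.card_image_le.trans hCk, ?_⟩
  calc kzCost z X (C.image p) ≤ 2 ^ z * kzCost z X C :=
        kzCost_le_rpow_mul_of_dSet_le (by linarith) zero_le_two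
          fun x hx => dSet_image_le_two_mul hp hC hx
    _ ≤ 2 ^ (z + 1) * kzCost z X C := by
        gcongr
        · exact Finset.sum_nonneg fun x _ => Real.rpow_nonneg (dSet_nonneg x C) z
        · exact one_le_two
        · linarith

/-- For any nonempty set `C` of at most `k` centers in `ℝ^d`, there is a nonempty subset
`C' ⊆ X` with at most `k` points whose `(k,z)`-clustering cost on `X` is within a
`2^{z+1}` factor; in particular the optimal `(k,z)`-medoids cost is at most `2^{z+1}`
times the optimal `(k,z)`-clustering cost. -/
theorem medoids_cost_vs_clustering_cost
    (d k : ℕ) (hd : 1 ≤ d) (hk : 1 ≤ k) (z : ℝ) (hz : 1 ≤ z)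
    (X : Finset (EuclideanSpace ℝ (Fin d))) (hX : X.Nonempty)
    (C : Finset (EuclideanSpace ℝ (Fin d))) (hC : C.Nonempty) (hCk : C.card ≤ k) :
    ∃ C' : Finset (EuclideanSpace ℝ (Fin d)),
      C' ⊆ X ∧ C'.Nonempty ∧ C'.card ≤ k ∧
        kzCost z X C' ≤ 2 ^ (z + 1) * kzCost z X C :=
  medoids_cost_vs_clustering_cost_general d k z hz X hX C hC hCk
end

section
/- Let d ≥ 1 be an integer, ℓ > 0, t > 2, and let S ⊆ ℝ^d be a finite set. Let the shift s be drawn uniformly at random from [0, ℓ)^d (coordinates independent and uniform). Then with probability at least 1 − 2d|S|/t, the following holds: every pair x, y ∈ S that lie in different cells of the axis-aligned grid with side length ℓ and shift s satisfies ‖x − y‖₂ ≥ ℓ/t. In particular, conditioned on the event that for every x ∈ S and every coordinate i the fractional part of (x_i − s_i)/ℓ lies in [1/t, 1 − 1/t] — an event of probability at least 1 − 2d|S|/t — any two points of S in different cells are at Euclidean distance at least ℓ/t. -/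
/-!
A coordinate `s i` of the shift is bad for `x ∈ S` when `(x i - s i) / ℓ` lies within `δ = 1/t`
of an integer, i.e. when the image of `s i` in the circle `ℝ/ℓℤ` lies in the closed ball of radius
`ℓδ` about that of `x i`. As `[0, ℓ)` is a fundamental domain of `ℝ/ℓℤ`, this happens with
probability at most `2δ`, and a union bound over the `d|S|` pairs `(x, i)` bounds the probability
that some coordinate is bad. If none is, then in a coordinate where the cells of `x` and `y` differ,
`(x i - s i) / ℓ` is at distance at least `δ` from every point of another unit interval, so
`dist x y ≥ |x i - y i| ≥ ℓδ`.
-/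

open MeasureTheory Set

lemma le_abs_sub_of_floor_ne {a b δ : ℝ} (hab : ⌊a⌋ ≠ ⌊b⌋) (ha : Int.fract a ∈ Icc δ (1 - δ)) :
    δ ≤ |a - b| := by
  have ha' := Int.floor_add_fract a
  have hb' := Int.floor_add_fract b
  have hb0 := Int.fract_nonneg b
  have hb1 := Int.fract_lt_one b
  rcases hab.lt_or_gt with hlt | hlt
  · have : (⌊a⌋ : ℝ) + 1 ≤ ⌊b⌋ := by exact_mod_cast hlt
    rw [abs_sub_comm]
    exact le_abs.2 (Or.inl (by linarith [ha.2]))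
  · have : (⌊b⌋ : ℝ) + 1 ≤ ⌊a⌋ := by exact_mod_cast hlt
    exact le_abs.2 (Or.inl (by linarith [ha.1]))

lemma AddCircle.norm_coe_le_of_fract_notMem_Icc {ℓ : ℝ} (hℓ : 0 < ℓ) {x δ : ℝ}
    (hx : Int.fract (x / ℓ) ∉ Icc δ (1 - δ)) : ‖(x : AddCircle ℓ)‖ ≤ ℓ * δ := by
  rw [AddCircle.norm_eq' ℓ hℓ, inv_mul_eq_div, abs_sub_round_eq_min]
  refine mul_le_mul_of_nonneg_left ?_ hℓ.le
  rw [mem_Icc, not_and_or, not_le, not_le] at hx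
  rcases hx with hx | hx
  · exact (min_le_left _ _).trans hx.le
  · exact (min_le_right _ _).trans (by linarith)

lemma volume_Ico_inter_fract_notMem_Icc_le {ℓ : ℝ} (hℓ : 0 < ℓ) (c δ : ℝ) :
    volume (Ico 0 ℓ ∩ {u | Int.fract ((c - u) / ℓ) ∉ Icc δ (1 - δ)}) ≤
      ENNReal.ofReal (2 * δ * ℓ) := by
  have : Fact (0 < ℓ) := ⟨hℓ⟩
  have hsub : {u : ℝ | Int.fract ((c - u) / ℓ) ∉ Icc δ (1 - δ)} ⊆
      (↑) ⁻¹' Metric.closedBall (c : AddCircle ℓ) (ℓ * δ) := fun u hu => by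
    rw [mem_preimage, Metric.mem_closedBall, dist_comm, dist_eq_norm, ← AddCircle.coe_sub]
    exact AddCircle.norm_coe_le_of_fract_notMem_Icc hℓ hu
  calc volume (Ico 0 ℓ ∩ {u | Int.fract ((c - u) / ℓ) ∉ Icc δ (1 - δ)})
      = volume (Ioc 0 ℓ ∩ {u | Int.fract ((c - u) / ℓ) ∉ Icc δ (1 - δ)}) :=
        measure_congr (Ico_ae_eq_Ioc.inter (ae_eq_refl _))
    _ ≤ volume ((↑) ⁻¹' Metric.closedBall (c : AddCircle ℓ) (ℓ * δ) ∩ Ioc 0 (0 + ℓ)) := by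
        rw [inter_comm, zero_add]
        exact measure_mono (inter_subset_inter_left _ hsub)
    _ = volume (Metric.closedBall (c : AddCircle ℓ) (ℓ * δ)) :=
        (AddCircle.add_projection_respects_measure ℓ 0 measurableSet_closedBall).symm
    _ ≤ ENNReal.ofReal (2 * δ * ℓ) := by
        rw [AddCircle.volume_closedBall]
        exact ENNReal.ofReal_le_ofReal ((min_le_right _ _).trans_eq (by ring))

namespace EuclideanSpace

variable {ι : Type*} [Fintype ι]

lemma le_dist_of_floor_ne {ℓ δ : ℝ} (hℓ : 0 < ℓ) {s x y : EuclideanSpace ℝ ι} {i : ι}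
    (hxy : ⌊(x i - s i) / ℓ⌋ ≠ ⌊(y i - s i) / ℓ⌋)
    (hx : Int.fract ((x i - s i) / ℓ) ∈ Icc δ (1 - δ)) : ℓ * δ ≤ dist x y := by
  have h := le_abs_sub_of_floor_ne hxy hx
  rw [← sub_div, sub_sub_sub_cancel_right, abs_div, abs_of_pos hℓ, le_div_iff₀ hℓ, mul_comm,
    ← Real.dist_eq] at h
  exact h.trans (PiLp.dist_apply_le x y i)

lemma volume_setOf_forall_mem (I : ι → Set ℝ) :
    volume {s : EuclideanSpace ℝ ι | ∀ j, s j ∈ I j} = ∏ j, volume (I j) := by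
  rw [← (volume_preserving_symm_measurableEquiv_toLp ι).symm.measure_preimage_equiv, volume_pi,
    ← Measure.pi_pi]
  congr 1
  ext
  simp

lemma volume_setOf_forall_mem_and_mem_mul [DecidableEq ι] (I : ι → Set ℝ) (i : ι) (A : Set ℝ) :
    volume {s : EuclideanSpace ℝ ι | (∀ j, s j ∈ I j) ∧ s i ∈ A} * volume (I i) =
      volume (I i ∩ A) * volume {s : EuclideanSpace ℝ ι | ∀ j, s j ∈ I j} := by
  have hset : {s : EuclideanSpace ℝ ι | (∀ j, s j ∈ I j) ∧ s i ∈ A} =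
      {s | ∀ j, s j ∈ Function.update I i (I i ∩ A) j} := by
    ext s
    rw [mem_ofPred, mem_ofPred, Function.forall_update_iff I (p := fun j u => s j ∈ u)]
    constructor
    · exact fun ⟨hI, hA⟩ => ⟨⟨hI i, hA⟩, fun j _ => hI j⟩
    · rintro ⟨⟨hIi, hA⟩, hI⟩
      exact ⟨fun j => (eq_or_ne j i).elim (fun h => h ▸ hIi) (hI j), hA⟩
  rw [hset, volume_setOf_forall_mem, volume_setOf_forall_mem,
    Finset.prod_congr rfl fun j _ => Function.apply_update (fun _ => volume) I i (I i ∩ A) j,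
    Finset.prod_update_of_mem (Finset.mem_univ i), ← Finset.mul_prod_erase _ _ (Finset.mem_univ i),
    Finset.sdiff_singleton_eq_erase]
  ring

lemma volume_box_inter_fract_notMem_Icc_le {ℓ : ℝ} (hℓ : 0 < ℓ) (c δ : ℝ) (i : ι) :
    volume {s : EuclideanSpace ℝ ι |
        (∀ j, s j ∈ Ico 0 ℓ) ∧ s i ∈ {u | Int.fract ((c - u) / ℓ) ∉ Icc δ (1 - δ)}} ≤
      ENNReal.ofReal (2 * δ) * volume {s : EuclideanSpace ℝ ι | ∀ j, s j ∈ Ico 0 ℓ} := by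
  classical
  have hℓ₀ : ENNReal.ofReal ℓ ≠ 0 := ENNReal.ofReal_ne_zero_iff.2 hℓ
  rw [← ENNReal.mul_le_mul_iff_left hℓ₀ ENNReal.ofReal_ne_top]
  have h := volume_setOf_forall_mem_and_mem_mul (fun _ : ι => Ico 0 ℓ) i
    {u | Int.fract ((c - u) / ℓ) ∉ Icc δ (1 - δ)}
  rw [Real.volume_Ico, sub_zero] at h
  rw [h, mul_right_comm, ← ENNReal.ofReal_mul' hℓ.le]
  gcongr
  exact volume_Ico_inter_fract_notMem_Icc_le hℓ c δ

def IsPaddedShift (ℓ δ : ℝ) (S : Finset (EuclideanSpace ℝ ι)) (s : EuclideanSpace ℝ ι) : Prop :=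
  ∀ x ∈ S, ∀ i, Int.fract ((x i - s i) / ℓ) ∈ Icc δ (1 - δ)

lemma one_sub_mul_volume_box_le_volume_isPaddedShift {ℓ : ℝ} (hℓ : 0 < ℓ) (δ : ℝ)
    (S : Finset (EuclideanSpace ℝ ι)) :
    (1 - ENNReal.ofReal (2 * Fintype.card ι * S.card * δ)) *
        volume {s : EuclideanSpace ℝ ι | ∀ i, s i ∈ Ico 0 ℓ} ≤
      volume {s : EuclideanSpace ℝ ι | (∀ i, s i ∈ Ico 0 ℓ) ∧ IsPaddedShift ℓ δ S s} := by
  set box := {s : EuclideanSpace ℝ ι | ∀ i, s i ∈ Ico 0 ℓ}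
  set bad := fun (x : EuclideanSpace ℝ ι) (i : ι) => {s : EuclideanSpace ℝ ι |
    (∀ j, s j ∈ Ico 0 ℓ) ∧ s i ∈ {u | Int.fract ((x i - u) / ℓ) ∉ Icc δ (1 - δ)}}
  have hcover :
      box ⊆ {s | (∀ i, s i ∈ Ico 0 ℓ) ∧ IsPaddedShift ℓ δ S s} ∪ ⋃ x ∈ S, ⋃ i, bad x i := by
    intro s hs
    by_cases hpad : IsPaddedShift ℓ δ S s
    · exact Or.inl ⟨hs, hpad⟩
    · simp only [IsPaddedShift, not_forall] at hpad
      obtain ⟨x, hx, i, hi⟩ := hpad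
      exact Or.inr (mem_biUnion hx (mem_iUnion.2 ⟨i, hs, hi⟩))
  have hbad : volume (⋃ x ∈ S, ⋃ i, bad x i) ≤
      ENNReal.ofReal (2 * Fintype.card ι * S.card * δ) * volume box :=
    calc volume (⋃ x ∈ S, ⋃ i, bad x i)
        ≤ ∑ x ∈ S, ∑ i, volume (bad x i) := (measure_biUnion_finset_le S _).trans
          (Finset.sum_le_sum fun x _ => measure_iUnion_fintype_le _ _)
      _ ≤ ∑ x ∈ S, ∑ i : ι, ENNReal.ofReal (2 * δ) * volume box := by
          gcongr with x _ i
          exact volume_box_inter_fract_notMem_Icc_le hℓ (x i) δ i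
      _ = ENNReal.ofReal (2 * Fintype.card ι * S.card * δ) * volume box := by
          rw [Finset.sum_const, Finset.sum_const, Finset.card_univ, nsmul_eq_mul, nsmul_eq_mul,
            ← mul_assoc, ← mul_assoc, ← ENNReal.ofReal_natCast, ← ENNReal.ofReal_natCast,
            ← ENNReal.ofReal_mul (by positivity), ← ENNReal.ofReal_mul (by positivity)]
          congr 2
          ring
  have hbox_ne_top : volume box ≠ ⊤ := by
    rw [volume_setOf_forall_mem]
    exact ENNReal.prod_ne_top fun _ _ => measure_Ico_lt_top.ne
  rw [ENNReal.sub_mul fun _ _ => hbox_ne_top, one_mul, tsub_le_iff_right]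
  calc volume box ≤ _ := measure_mono hcover
    _ ≤ _ := measure_union_le _ _
    _ ≤ _ := by gcongr

end EuclideanSpace

theorem random_shift_grid_separation_general
    (d : ℕ) (ℓ t : ℝ) (hℓ : 0 < ℓ)
    (S : Finset (EuclideanSpace ℝ (Fin d))) :
    (1 - ENNReal.ofReal (2 * d * S.card / t)) *
        volume {s : EuclideanSpace ℝ (Fin d) | ∀ i : Fin d, s i ∈ Set.Ico (0 : ℝ) ℓ} ≤
      volume {s : EuclideanSpace ℝ (Fin d) |
        (∀ i : Fin d, s i ∈ Set.Ico (0 : ℝ) ℓ) ∧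
        ∀ x ∈ S, ∀ y ∈ S,
          (∃ i : Fin d, ⌊(x i - s i) / ℓ⌋ ≠ ⌊(y i - s i) / ℓ⌋) → ℓ / t ≤ dist x y} ∧
    (1 - ENNReal.ofReal (2 * d * S.card / t)) *
        volume {s : EuclideanSpace ℝ (Fin d) | ∀ i : Fin d, s i ∈ Set.Ico (0 : ℝ) ℓ} ≤
      volume {s : EuclideanSpace ℝ (Fin d) |
        (∀ i : Fin d, s i ∈ Set.Ico (0 : ℝ) ℓ) ∧
        ∀ x ∈ S, ∀ i : Fin d,
          1 / t ≤ Int.fract ((x i - s i) / ℓ) ∧ Int.fract ((x i - s i) / ℓ) ≤ 1 - 1 / t} ∧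
    (∀ s : EuclideanSpace ℝ (Fin d),
      (∀ x ∈ S, ∀ i : Fin d,
        1 / t ≤ Int.fract ((x i - s i) / ℓ) ∧ Int.fract ((x i - s i) / ℓ) ≤ 1 - 1 / t) →
      ∀ x ∈ S, ∀ y ∈ S,
        (∃ i : Fin d, ⌊(x i - s i) / ℓ⌋ ≠ ⌊(y i - s i) / ℓ⌋) → ℓ / t ≤ dist x y) := by
  have hpadded := EuclideanSpace.one_sub_mul_volume_box_le_volume_isPaddedShift hℓ (1 / t) S
  rw [Fintype.card_fin, mul_one_div] at hpadded
  have hsep : ∀ s, EuclideanSpace.IsPaddedShift ℓ (1 / t) S s → ∀ x ∈ S, ∀ y ∈ S,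
      (∃ i, ⌊(x i - s i) / ℓ⌋ ≠ ⌊(y i - s i) / ℓ⌋) → ℓ / t ≤ dist x y := by
    rintro s hs x hx y _ ⟨i, hi⟩
    simpa only [mul_one_div] using EuclideanSpace.le_dist_of_floor_ne hℓ hi (hs x hx i)
  exact ⟨hpadded.trans (measure_mono fun s hs => ⟨hs.1, hsep s hs.2⟩), hpadded, hsep⟩

/-- For a uniformly random shift `s ∈ [0,ℓ)^d`, with probability at least
`1 − 2d|S|/t`, every pair of points of `S` lying in different cells of the axis-aligned
grid with side length `ℓ` and shift `s` is at Euclidean distance at least `ℓ/t`.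
The underlying event (all fractional parts `(x_i − s_i)/ℓ` lying in `[1/t, 1 − 1/t]`)
also has probability at least `1 − 2d|S|/t` and deterministically implies the
separation property. -/
theorem random_shift_grid_separation
    (d : ℕ) (hd : 1 ≤ d) (ℓ t : ℝ) (hℓ : 0 < ℓ) (ht : 2 < t)
    (S : Finset (EuclideanSpace ℝ (Fin d))) :
    (1 - ENNReal.ofReal (2 * d * S.card / t)) *
        volume {s : EuclideanSpace ℝ (Fin d) | ∀ i : Fin d, s i ∈ Set.Ico (0 : ℝ) ℓ} ≤
      volume {s : EuclideanSpace ℝ (Fin d) |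
        (∀ i : Fin d, s i ∈ Set.Ico (0 : ℝ) ℓ) ∧
        ∀ x ∈ S, ∀ y ∈ S,
          (∃ i : Fin d, ⌊(x i - s i) / ℓ⌋ ≠ ⌊(y i - s i) / ℓ⌋) → ℓ / t ≤ dist x y} ∧
    (1 - ENNReal.ofReal (2 * d * S.card / t)) *
        volume {s : EuclideanSpace ℝ (Fin d) | ∀ i : Fin d, s i ∈ Set.Ico (0 : ℝ) ℓ} ≤
      volume {s : EuclideanSpace ℝ (Fin d) |
        (∀ i : Fin d, s i ∈ Set.Ico (0 : ℝ) ℓ) ∧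
        ∀ x ∈ S, ∀ i : Fin d,
          1 / t ≤ Int.fract ((x i - s i) / ℓ) ∧ Int.fract ((x i - s i) / ℓ) ≤ 1 - 1 / t} ∧
    (∀ s : EuclideanSpace ℝ (Fin d),
      (∀ x ∈ S, ∀ i : Fin d,
        1 / t ≤ Int.fract ((x i - s i) / ℓ) ∧ Int.fract ((x i - s i) / ℓ) ≤ 1 - 1 / t) →
      ∀ x ∈ S, ∀ y ∈ S,
        (∃ i : Fin d, ⌊(x i - s i) / ℓ⌋ ≠ ⌊(y i - s i) / ℓ⌋) → ℓ / t ≤ dist x y) :=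
  random_shift_grid_separation_general d ℓ t hℓ S
end

section
/- Let n, d ≥ 1 be integers and M ≥ 1. Let A be an n×d matrix with integer entries satisfying |A_{ij}| ≤ M for all i, j. Then every nonzero eigenvalue λ of the d×d matrix AᵀA satisfies (d·n·M²)^{−d} ≤ λ ≤ d·n·M². Consequently, every nonzero singular value σ of A satisfies |log σ| = O(d · log(ndM)). -/
/-!
Every eigenvalue of the positive semidefinite matrix `AᵀA` lies in `[0, tr(AᵀA)]`, and
`tr(AᵀA) = ∑ A_ij² ≤ dnM²`. For the lower bound, `AᵀA` has integer entries, so its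
characteristic polynomial `∏ (X - μᵢ)` lies in `ℤ[X]`; its lowest nonzero coefficient is,
up to sign, the product of the nonzero eigenvalues, hence that product is at least `1`.
Dividing by the other (at most `d - 1`) nonzero eigenvalues, each at most `dnM²`, gives
`λ ≥ (dnM²)^{-(d-1)}`. Taking logarithms gives `|log σ| ≤ d log(ndM)`.
-/

open Polynomial Finset

theorem one_le_abs_prod_ne_zero_of_prod_X_sub_C_eq_map {ι : Type*} [Fintype ι] (μ : ι → ℝ)
    {p : ℤ[X]} (hp : ∏ i, (X - C (μ i)) = p.map (Int.castRingHom ℝ)) :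
    1 ≤ |∏ i ∈ univ.filter (μ · ≠ 0), μ i| := by
  set S := univ.filter (μ · ≠ 0)
  set k := #(univ.filter (μ · = 0))
  have hsplit : ∏ i, (X - C (μ i)) = X ^ k * ∏ i ∈ S, (X - C (μ i)) := by
    rw [← prod_filter_mul_prod_filter_not univ (μ · = 0), ← prod_const]
    congr 1
    exact prod_congr rfl fun i hi => by simp [(mem_filter.mp hi).2]
  have hcoeff : (p.coeff k : ℝ) = ∏ i ∈ S, -μ i := by
    have := congrArg (coeff · k) hp
    simp only [coeff_map, eq_intCast] at this
    rw [← this, hsplit, coeff_X_pow_mul', if_pos le_rfl, Nat.sub_self, coeff_zero_eq_eval_zero,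
      eval_prod]
    simp
  have hne : p.coeff k ≠ 0 := by
    rw [← Int.cast_ne_zero (α := ℝ), hcoeff]
    exact prod_ne_zero_iff.mpr fun i hi => neg_ne_zero.mpr (mem_filter.mp hi).2
  calc (1 : ℝ) ≤ |(p.coeff k : ℝ)| := by exact_mod_cast Int.one_le_abs hne
    _ = |∏ i ∈ S, μ i| := by rw [hcoeff, prod_neg, abs_mul, abs_pow, abs_neg, abs_one, one_pow,
      one_mul]

theorem inv_pow_le_of_one_le_prod_ne_zero {ι : Type*} [Fintype ι] {μ : ι → ℝ} {K : ℝ}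
    (hK : 1 ≤ K) (hμ : ∀ i, μ i ∈ Set.Icc 0 K) (hprod : 1 ≤ ∏ i ∈ univ.filter (μ · ≠ 0), μ i)
    {i : ι} (hi : μ i ≠ 0) : (K ^ (Fintype.card ι - 1))⁻¹ ≤ μ i := by
  classical
  set S := univ.filter (μ · ≠ 0)
  have hiS : i ∈ S := mem_filter.mpr ⟨mem_univ i, hi⟩
  have hrest : ∏ j ∈ S.erase i, μ j ≤ K ^ (Fintype.card ι - 1) :=
    calc ∏ j ∈ S.erase i, μ j ≤ ∏ _j ∈ S.erase i, K :=
          prod_le_prod (fun j _ => (hμ j).1) (fun j _ => (hμ j).2)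
      _ = K ^ (S.card - 1) := by rw [prod_const, card_erase_of_mem hiS]
      _ ≤ K ^ (Fintype.card ι - 1) :=
          pow_le_pow_right₀ hK (Nat.sub_le_sub_right (card_le_univ S) 1)
  rw [inv_le_iff_one_le_mul₀ (by positivity)]
  calc 1 ≤ ∏ j ∈ S, μ j := hprod
    _ = μ i * ∏ j ∈ S.erase i, μ j := (mul_prod_erase S μ hiS).symm
    _ ≤ μ i * K ^ (Fintype.card ι - 1) := mul_le_mul_of_nonneg_left hrest (hμ i).1

namespace Matrix

variable {m n : Type*}

theorem exists_map_intCast_eq {R : Type*} [IntCast R] {A : Matrix m n R}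
    (hint : ∀ i j, ∃ z : ℤ, A i j = z) :
    ∃ Z : Matrix m n ℤ, Z.map (↑) = A :=
  ⟨of fun i j => (hint i j).choose, by ext i j; exact (hint i j).choose_spec.symm⟩

variable [Fintype m] [Fintype n]

theorem trace_transpose_mul_self_le (A : Matrix m n ℝ) {M : ℝ} (hA : ∀ i j, |A i j| ≤ M) :
    (Aᵀ * A).trace ≤ Fintype.card n * Fintype.card m * M ^ 2 := by
  calc (Aᵀ * A).trace = ∑ j, ∑ i, A i j ^ 2 := by simp [trace, mul_apply, sq]
    _ ≤ ∑ _j : n, ∑ _i : m, M ^ 2 := by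
      refine sum_le_sum fun j _ => sum_le_sum fun i _ => ?_
      exact sq_le_sq' (abs_le.mp (hA i j)).1 (abs_le.mp (hA i j)).2
    _ = _ := by simp only [sum_const, card_univ, nsmul_eq_mul]; ring

variable [DecidableEq n]

theorem IsHermitian.exists_eigenvalues_eq {B : Matrix n n ℝ} (hB : B.IsHermitian) {v : n → ℝ}
    {t : ℝ} (hv : v ≠ 0) (h : B *ᵥ v = t • v) : ∃ i, hB.eigenvalues i = t := by
  have ht : Module.End.HasEigenvalue (toLin' B) t :=
    Module.End.hasEigenvalue_of_hasEigenvector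
      ⟨by simpa [Module.End.mem_eigenspace_iff] using h, hv⟩
  have hmem := ht.mem_spectrum
  rwa [spectrum_toLin', hB.spectrum_real_eq_range_eigenvalues] at hmem

theorem PosSemidef.eigenvalues_le_trace {B : Matrix n n ℝ} (hB : B.PosSemidef) (i : n) :
    hB.isHermitian.eigenvalues i ≤ B.trace := by
  rw [hB.isHermitian.trace_eq_sum_eigenvalues]
  exact single_le_sum (fun j _ => hB.eigenvalues_nonneg j) (mem_univ i)

theorem IsHermitian.one_le_abs_prod_ne_zero_eigenvalues_of_int {B : Matrix n n ℝ}
    (hB : B.IsHermitian) (hint : ∀ i j, ∃ z : ℤ, B i j = z) :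
    1 ≤ |∏ i ∈ univ.filter (hB.eigenvalues · ≠ 0), hB.eigenvalues i| := by
  obtain ⟨Z, rfl⟩ := exists_map_intCast_eq hint
  refine one_le_abs_prod_ne_zero_of_prod_X_sub_C_eq_map _ (p := Z.charpoly) ?_
  rw [← charpoly_map]
  simpa using hB.charpoly_eq.symm

theorem eigenvalue_transpose_mul_self_mem_Icc_of_int {A : Matrix m n ℝ}
    (hint : ∀ i j, ∃ z : ℤ, A i j = z) {K : ℝ} (hK : 1 ≤ K) (htr : (Aᵀ * A).trace ≤ K)
    {v : n → ℝ} {t : ℝ} (hv : v ≠ 0) (ht : t ≠ 0) (h : (Aᵀ * A) *ᵥ v = t • v) :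
    (K ^ (Fintype.card n - 1))⁻¹ ≤ t ∧ t ≤ K := by
  have hA : (Aᵀ * A).PosSemidef := by simpa using posSemidef_conjTranspose_mul_self A
  have hgram : ∀ i j, ∃ z : ℤ, (Aᵀ * A) i j = z := by
    obtain ⟨Z, rfl⟩ := exists_map_intCast_eq hint
    intro i j
    refine ⟨(Zᵀ * Z) i j, ?_⟩
    simp [mul_apply]
  have hmem : ∀ i, hA.isHermitian.eigenvalues i ∈ Set.Icc 0 K :=
    fun i => ⟨hA.eigenvalues_nonneg i, (hA.eigenvalues_le_trace i).trans htr⟩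
  have hprod : 1 ≤ ∏ i ∈ univ.filter (hA.isHermitian.eigenvalues · ≠ 0),
      hA.isHermitian.eigenvalues i := by
    simpa [abs_of_nonneg, prod_nonneg, hA.eigenvalues_nonneg] using
      hA.isHermitian.one_le_abs_prod_ne_zero_eigenvalues_of_int hgram
  obtain ⟨i, rfl⟩ := hA.isHermitian.exists_eigenvalues_eq hv h
  exact ⟨inv_pow_le_of_one_le_prod_ne_zero hK hmem hprod ht, (hmem i).2⟩

end Matrix

theorem abs_log_le_of_inv_pow_le_sq {σ K N : ℝ} {d : ℕ} (hσ : 0 < σ) (hd : 1 ≤ d) (hK : 1 ≤ K)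
    (hKN : K ≤ N ^ 2) (hlow : (K ^ d)⁻¹ ≤ σ ^ 2) (hup : σ ^ 2 ≤ K) :
    |Real.log σ| ≤ d * Real.log N := by
  have hlogK : 0 ≤ Real.log K := Real.log_nonneg hK
  have hKN' : Real.log K ≤ 2 * Real.log N := by
    simpa [Real.log_pow] using Real.log_le_log (by linarith) hKN
  have hup' : 2 * Real.log σ ≤ Real.log K := by
    simpa [Real.log_pow] using Real.log_le_log (by positivity) hup
  have hlow' : -(d * Real.log K) ≤ 2 * Real.log σ := by
    simpa [Real.log_pow, Real.log_inv] using Real.log_le_log (by positivity) hlow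
  have hd' : (1 : ℝ) ≤ d := by exact_mod_cast hd
  rw [abs_le]
  constructor <;> nlinarith

open Matrix

/-- For an `n × d` matrix `A` with integer entries bounded in magnitude by `M ≥ 1`,
every nonzero eigenvalue `λ` of `AᵀA` satisfies `(dnM²)^{-d} ≤ λ ≤ dnM²`, and
consequently every nonzero singular value `σ` of `A` (i.e. `σ > 0` with `σ²` an
eigenvalue of `AᵀA`) satisfies `|log σ| = O(d·log(ndM))`. -/
theorem singular_value_log_bound :
    ∃ c : ℝ, 0 < c ∧
      ∀ (n d : ℕ), 1 ≤ n → 1 ≤ d → ∀ M : ℝ, 1 ≤ M →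
        ∀ A : Matrix (Fin n) (Fin d) ℝ,
          (∀ i j, ∃ m : ℤ, A i j = (m : ℝ)) → (∀ i j, |A i j| ≤ M) →
          (∀ lam : ℝ, lam ≠ 0 →
            (∃ v : Fin d → ℝ, v ≠ 0 ∧ (Aᵀ * A).mulVec v = lam • v) →
            (((d : ℝ) * n * M ^ 2) ^ d)⁻¹ ≤ lam ∧ lam ≤ (d : ℝ) * n * M ^ 2) ∧
          (∀ σ : ℝ, 0 < σ →
            (∃ v : Fin d → ℝ, v ≠ 0 ∧ (Aᵀ * A).mulVec v = (σ ^ 2) • v) →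
            |Real.log σ| ≤ c * d * Real.log ((n : ℝ) * d * M)) := by
  refine ⟨1, one_pos, fun n d hn hd M hM A hint hA => ?_⟩
  have hn' : (1 : ℝ) ≤ n := by exact_mod_cast hn
  have hd' : (1 : ℝ) ≤ d := by exact_mod_cast hd
  set K : ℝ := d * n * M ^ 2
  have hK : 1 ≤ K := one_le_mul_of_one_le_of_one_le (one_le_mul_of_one_le_of_one_le hd' hn')
    (one_le_pow₀ hM)
  have htr : (Aᵀ * A).trace ≤ K := by simpa using trace_transpose_mul_self_le A hA
  have heig : ∀ lam : ℝ, lam ≠ 0 → (∃ v : Fin d → ℝ, v ≠ 0 ∧ (Aᵀ * A) *ᵥ v = lam • v) →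
      (K ^ d)⁻¹ ≤ lam ∧ lam ≤ K := by
    rintro lam hlam ⟨v, hv, h⟩
    obtain ⟨hlow, hup⟩ := eigenvalue_transpose_mul_self_mem_Icc_of_int hint hK htr hv hlam h
    refine ⟨le_trans ?_ hlow, hup⟩
    exact inv_anti₀ (by positivity) (pow_le_pow_right₀ hK (by simp))
  refine ⟨heig, fun σ hσ hv => ?_⟩
  obtain ⟨hlow, hup⟩ := heig _ (by positivity) hv
  have hKN : K ≤ ((n : ℝ) * d * M) ^ 2 :=
    calc K ≤ (d * n) * K := le_mul_of_one_le_left (by positivity)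
          (one_le_mul_of_one_le_of_one_le hd' hn')
      _ = ((n : ℝ) * d * M) ^ 2 := by ring
  simpa using abs_log_le_of_inv_pow_le_sq hσ hd hK hKN hlow hup
end

section
/- For every ε ∈ (0, 1/2), every real p ≥ 1, every integer d ≥ 1, and every D ≥ 1, there exists ε'₀ > 0 depending only on ε, p, d, and D (and not on n) such that the following holds for every integer n ≥ 1 and all 0 < ε' ≤ ε'₀. Let B ∈ ℝ^{n×d} satisfy (1/D)·‖y‖_p ≤ ‖By‖_p ≤ D·‖y‖_p for all y ∈ ℝ^d, and let B' ∈ ℝ^{n×d} satisfy |B'_{tj} − B_{tj}| ≤ ε'·|B_{tj}| for all t ∈ {1,…,n} and j ∈ {1,…,d}. Then for all y ∈ ℝ^d: (1 − ε)·‖By‖_p^p ≤ ‖B'y‖_p^p ≤ (1 + ε)·‖By‖_p^p. -/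
open scoped BigOperators

/-- The `L_p` norm of a vector `v ∈ ℝ^n`: `(Σ_i |v_i|^p)^{1/p}`. -/
noncomputable def lpNorm {n : ℕ} (p : ℝ) (v : Fin n → ℝ) : ℝ :=
  (∑ i, |v i| ^ p) ^ (1 / p)

/-!
Since `x ↦ x ^ p` is continuous at `1`, there is `δ > 0` such that `|N - M| ≤ δ M` implies
`|N ^ p - M ^ p| ≤ ε M ^ p`; by the reverse triangle inequality it suffices to make
`‖(B' - B) y‖_p ≤ δ ‖B y‖_p`. Expanding `(B' - B) y` along the columns and applying Minkowski,
`‖(B' - B) y‖_p ≤ ε' Σ_j |y_j| ‖B e_j‖_p ≤ ε' D Σ_j |y_j| ≤ ε' D d ‖y‖_p ≤ ε' d D² ‖B y‖_p`,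
so `ε'₀ = δ / (d D²)` works whatever `n` is.
-/

open Matrix

theorem exists_pos_abs_rpow_sub_rpow_le {ε p : ℝ} (hε0 : 0 < ε) (hε1 : ε < 1) (hp : 0 < p) :
    ∃ δ > 0, ∀ x y : ℝ, 0 ≤ x → 0 ≤ y → |y - x| ≤ δ * x → |y ^ p - x ^ p| ≤ ε * x ^ p := by
  set a := (1 + ε) ^ p⁻¹
  set b := (1 - ε) ^ p⁻¹
  have ha : 1 < a := Real.one_lt_rpow (by linarith) (inv_pos.2 hp)
  have hb0 : 0 ≤ b := by positivity
  have hb : b < 1 := Real.rpow_lt_one (by linarith) (by linarith) (inv_pos.2 hp)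
  refine ⟨min (a - 1) (1 - b), lt_min (by linarith) (by linarith), fun x y hx hy hxy => ?_⟩
  obtain ⟨hlo, hup⟩ := abs_le.1 hxy
  have hya : y ^ p ≤ (1 + ε) * x ^ p := by
    have hyx : y ≤ a * x := by nlinarith [min_le_left (a - 1) (1 - b)]
    calc y ^ p ≤ (a * x) ^ p := Real.rpow_le_rpow hy hyx hp.le
      _ = (1 + ε) * x ^ p := by
        rw [Real.mul_rpow (by positivity) hx, Real.rpow_inv_rpow (by linarith) hp.ne']
  have hyb : (1 - ε) * x ^ p ≤ y ^ p := by
    have hyx : b * x ≤ y := by nlinarith [min_le_right (a - 1) (1 - b)]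
    calc (1 - ε) * x ^ p = (b * x) ^ p := by
          rw [Real.mul_rpow hb0 hx, Real.rpow_inv_rpow (by linarith) hp.ne']
      _ ≤ y ^ p := Real.rpow_le_rpow (by positivity) hyx hp.le
  rw [abs_le]
  constructor <;> linarith

section

variable {m n : ℕ} {p : ℝ}

theorem lpNorm_nonneg (v : Fin n → ℝ) : 0 ≤ lpNorm p v := by
  unfold lpNorm; positivity

theorem lpNorm_mono (hp : 0 ≤ p) {v w : Fin n → ℝ} (h : ∀ i, |v i| ≤ |w i|) :
    lpNorm p v ≤ lpNorm p w := by
  unfold lpNorm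
  gcongr ?_ ^ _
  exact Finset.sum_le_sum fun i _ => Real.rpow_le_rpow (abs_nonneg _) (h i) hp

theorem lpNorm_smul (hp : 0 < p) (c : ℝ) (v : Fin n → ℝ) :
    lpNorm p (c • v) = |c| * lpNorm p v := by
  unfold lpNorm
  simp_rw [Pi.smul_apply, smul_eq_mul, abs_mul, Real.mul_rpow (abs_nonneg _) (abs_nonneg _),
    ← Finset.mul_sum]
  rw [Real.mul_rpow (by positivity) (by positivity), one_div,
    Real.rpow_rpow_inv (abs_nonneg _) hp.ne']

theorem lpNorm_le_mul_of_abs_le (hp : 0 < p) {r : ℝ} (hr : 0 ≤ r) {v w : Fin n → ℝ}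
    (h : ∀ i, |v i| ≤ r * |w i|) : lpNorm p v ≤ r * lpNorm p w := by
  rw [← abs_of_nonneg hr, ← lpNorm_smul hp]
  exact lpNorm_mono hp.le fun i => by simpa [abs_mul, abs_of_nonneg hr] using h i

theorem abs_le_lpNorm (hp : 0 < p) (v : Fin n → ℝ) (i : Fin n) : |v i| ≤ lpNorm p v :=
  calc |v i| = (|v i| ^ p) ^ (1 / p) := by
        rw [one_div, Real.rpow_rpow_inv (abs_nonneg _) hp.ne']
    _ ≤ lpNorm p v := by
        unfold lpNorm
        gcongr
        exact Finset.single_le_sum (f := fun j => |v j| ^ p) (fun j _ => by positivity)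
          (Finset.mem_univ i)

theorem sum_abs_le_card_mul_lpNorm (hp : 0 < p) (v : Fin n → ℝ) :
    ∑ i, |v i| ≤ n * lpNorm p v := by
  simpa using Finset.sum_le_card_nsmul Finset.univ _ _ fun i _ => abs_le_lpNorm hp v i

theorem lpNorm_pi_single_one (hp : 0 < p) (j : Fin n) : lpNorm p (Pi.single j 1) = 1 := by
  unfold lpNorm
  rw [Fintype.sum_eq_single j fun i hi => by simp [hi, Real.zero_rpow hp.ne']]
  simp

theorem lpNorm_eq_norm_toLp (hp : 0 < p) (v : Fin n → ℝ) :
    lpNorm p v = ‖WithLp.toLp (ENNReal.ofReal p) v‖ := by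
  rw [PiLp.norm_eq_sum (by rw [ENNReal.toReal_ofReal hp.le]; exact hp),
    ENNReal.toReal_ofReal hp.le]
  rfl

theorem fact_one_le_ofReal (hp : 1 ≤ p) : Fact (1 ≤ ENNReal.ofReal p) :=
  ⟨ENNReal.one_le_ofReal.2 hp⟩

theorem abs_lpNorm_sub_lpNorm_le (hp : 1 ≤ p) (v w : Fin n → ℝ) :
    |lpNorm p v - lpNorm p w| ≤ lpNorm p (v - w) := by
  have := fact_one_le_ofReal hp
  simp only [lpNorm_eq_norm_toLp (zero_lt_one.trans_le hp), WithLp.toLp_sub]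
  exact abs_norm_sub_norm_le _ _

theorem lpNorm_sum_le (hp : 1 ≤ p) {ι : Type*} (s : Finset ι) (f : ι → Fin n → ℝ) :
    lpNorm p (∑ i ∈ s, f i) ≤ ∑ i ∈ s, lpNorm p (f i) := by
  have := fact_one_le_ofReal hp
  simp only [lpNorm_eq_norm_toLp (zero_lt_one.trans_le hp), WithLp.toLp_sum]
  exact norm_sum_le _ _

theorem lpNorm_col_le (hp : 0 < p) {A : Matrix (Fin m) (Fin n) ℝ} {C : ℝ}
    (hA : ∀ y, lpNorm p (A *ᵥ y) ≤ C * lpNorm p y) (j : Fin n) : lpNorm p (A.col j) ≤ C := by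
  simpa [mulVec_single_one, lpNorm_pi_single_one hp] using hA (Pi.single j 1)

theorem lpNorm_mulVec_le (hp : 1 ≤ p) (A : Matrix (Fin m) (Fin n) ℝ) (y : Fin n → ℝ) :
    lpNorm p (A *ᵥ y) ≤ ∑ j, |y j| * lpNorm p (A.col j) := by
  have hcols : A *ᵥ y = ∑ j, y j • A.col j := by
    ext i; simp [mulVec, dotProduct, mul_comm]
  rw [hcols]
  simpa only [lpNorm_smul (zero_lt_one.trans_le hp)] using
    lpNorm_sum_le hp Finset.univ fun j => y j • A.col j

theorem lpNorm_mulVec_sub_mulVec_le (hp : 1 ≤ p) {A A' : Matrix (Fin m) (Fin n) ℝ} {r C : ℝ}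
    (hr : 0 ≤ r) (hC : 0 ≤ C) (hA : ∀ y, lpNorm p (A *ᵥ y) ≤ C * lpNorm p y)
    (hA' : ∀ i j, |A' i j - A i j| ≤ r * |A i j|) (y : Fin n → ℝ) :
    lpNorm p (A' *ᵥ y - A *ᵥ y) ≤ r * C * n * lpNorm p y := by
  have hp0 : 0 < p := zero_lt_one.trans_le hp
  have hcol (j : Fin n) : lpNorm p ((A' - A).col j) ≤ r * C :=
    calc lpNorm p ((A' - A).col j) ≤ r * lpNorm p (A.col j) :=
          lpNorm_le_mul_of_abs_le hp0 hr fun i => hA' i j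
      _ ≤ r * C := by gcongr; exact lpNorm_col_le hp0 hA j
  calc lpNorm p (A' *ᵥ y - A *ᵥ y) = lpNorm p ((A' - A) *ᵥ y) := by rw [sub_mulVec]
    _ ≤ ∑ j, |y j| * lpNorm p ((A' - A).col j) := lpNorm_mulVec_le hp _ _
    _ ≤ ∑ j, |y j| * (r * C) := by gcongr with j; exact hcol j
    _ = r * C * ∑ j, |y j| := by rw [← Finset.sum_mul, mul_comm]
    _ ≤ r * C * n * lpNorm p y := by
        rw [mul_assoc (r * C)]
        gcongr
        exact sum_abs_le_card_mul_lpNorm hp0 y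

end

/-- If `B` is well-conditioned (`(1/D)·‖y‖_p ≤ ‖By‖_p ≤ D·‖y‖_p`) and `B'` agrees with `B`
entrywise up to relative error `ε'`, then `‖B'y‖_p^p = (1 ± ε)·‖By‖_p^p` for all `y`,
provided `ε'` is small enough depending only on `ε`, `p`, `d`, `D` (and not on `n`). -/
theorem entrywise_rounding_preserves_lp
    (ε : ℝ) (hε0 : 0 < ε) (hε : ε < 1 / 2) (p : ℝ) (hp : 1 ≤ p)
    (d : ℕ) (hd : 1 ≤ d) (D : ℝ) (hD : 1 ≤ D) :
    ∃ ε'₀ : ℝ, 0 < ε'₀ ∧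
      ∀ (n : ℕ), 1 ≤ n → ∀ ε' : ℝ, 0 < ε' → ε' ≤ ε'₀ →
        ∀ B B' : Matrix (Fin n) (Fin d) ℝ,
          (∀ y : Fin d → ℝ,
            (1 / D) * lpNorm p y ≤ lpNorm p (B.mulVec y) ∧
              lpNorm p (B.mulVec y) ≤ D * lpNorm p y) →
          (∀ t j, |B' t j - B t j| ≤ ε' * |B t j|) →
          ∀ y : Fin d → ℝ,
            (1 - ε) * lpNorm p (B.mulVec y) ^ p ≤ lpNorm p (B'.mulVec y) ^ p ∧
              lpNorm p (B'.mulVec y) ^ p ≤ (1 + ε) * lpNorm p (B.mulVec y) ^ p := by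
  obtain ⟨δ, hδ, hpow⟩ := exists_pos_abs_rpow_sub_rpow_le (p := p) hε0 (by linarith) (by linarith)
  have hD0 : 0 < D := by linarith
  have hd0 : (0 : ℝ) < d := by exact_mod_cast hd
  refine ⟨δ / (d * D ^ 2), by positivity, fun n _ ε' hε' hε'δ B B' hB hB' y => ?_⟩
  have hy : lpNorm p y ≤ D * lpNorm p (B *ᵥ y) := by
    simpa [one_div, inv_mul_le_iff₀ hD0] using (hB y).1
  have hclose : |lpNorm p (B' *ᵥ y) - lpNorm p (B *ᵥ y)| ≤ δ * lpNorm p (B *ᵥ y) :=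
    calc |lpNorm p (B' *ᵥ y) - lpNorm p (B *ᵥ y)| ≤ lpNorm p (B' *ᵥ y - B *ᵥ y) :=
          abs_lpNorm_sub_lpNorm_le hp _ _
      _ ≤ ε' * D * d * lpNorm p y :=
          lpNorm_mulVec_sub_mulVec_le hp hε'.le hD0.le (fun y => (hB y).2) hB' y
      _ ≤ ε' * D * d * (D * lpNorm p (B *ᵥ y)) := by gcongr
      _ = ε' * (d * D ^ 2) * lpNorm p (B *ᵥ y) := by ring
      _ ≤ δ * lpNorm p (B *ᵥ y) := by
          gcongr
          · exact lpNorm_nonneg _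
          · exact (le_div_iff₀ (by positivity)).1 hε'δ
  obtain ⟨hlo, hup⟩ := abs_le.1 (hpow _ _ (lpNorm_nonneg _) (lpNorm_nonneg _) hclose)
  constructor <;> linarith
end
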